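/- Let T be a phylogenetic tree with labeled vertex set L and let R : L → ℕ be an injective ranking. If h ∈ V_T and j ∈ L satisfy Sg_R(h) = j, then every vertex u on the unique path in T between j and h satisfies Sg_R(u) = j. -/

import Mathlib

open SimpleGraph

/-- The threshold subgraph `G_{≤ t}`: same vertices, only edges of weight `≤ t`. -/
def thresholdGraph {V : Type*} (G : SimpleGraph V) (w : Sym2 V → ℝ) (t : ℝ) :
    SimpleGraph V where
  Adj u v := G.Adj u v ∧ w s(u, v) ≤ t
  symm := ⟨by
    intro u v hv
    exact ⟨hv.1.symm, by rw [Sym2.eq_swap]; exact hv.2⟩⟩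
  loopless := ⟨fun v hv => G.irrefl hv.1⟩

/-- The strict threshold subgraph `G_{< t}`. -/
def strictThresholdGraph {V : Type*} (G : SimpleGraph V) (w : Sym2 V → ℝ) (t : ℝ) :
    SimpleGraph V where
  Adj u v := G.Adj u v ∧ w s(u, v) < t
  symm := ⟨by
    intro u v hv
    exact ⟨hv.1.symm, by rw [Sym2.eq_swap]; exact hv.2⟩⟩
  loopless := ⟨fun v hv => G.irrefl hv.1⟩

/-- The laminar family of an edge-weighted graph: the whole vertex set together with the
vertex sets of the connected components of every threshold subgraph. -/
def laminarFamily {V : Type*} (G : SimpleGraph V) (w : Sym2 V → ℝ) : Set (Set V) :=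
  insert Set.univ
    {S | ∃ (t : ℝ) (C : (thresholdGraph G w t).ConnectedComponent), S = C.supp}

/-- `M` is a spanning tree of `G`. -/
def IsSpanningTree {V : Type*} (G M : SimpleGraph V) : Prop :=
  M ≤ G ∧ M.IsTree

/-- Total weight of (the edges of) a graph. -/
noncomputable def totalWeight {V : Type*} [Finite V] (M : SimpleGraph V)
    (w : Sym2 V → ℝ) : ℝ :=
  ∑ e ∈ M.edgeSet.toFinite.toFinset, w e

/-- `M` is a minimum spanning tree of `G` with respect to the weights `w`. -/
def IsMST {V : Type*} [Finite V] (G : SimpleGraph V) (w : Sym2 V → ℝ)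
    (M : SimpleGraph V) : Prop :=
  IsSpanningTree G M ∧ ∀ M' : SimpleGraph V, IsSpanningTree G M' →
    totalWeight M w ≤ totalWeight M' w

/-- A phylogenetic tree: a finite tree with strictly positive edge lengths and a nonempty
set `L` of labeled vertices, each hidden vertex having degree at least 3. -/
structure PhyloTree (V : Type*) where
  finV : Finite V
  T : SimpleGraph V
  isTree : T.IsTree
  len : Sym2 V → ℝ
  len_pos : ∀ e ∈ T.edgeSet, 0 < len e
  L : Set V
  L_nonempty : L.Nonempty
  hidden_deg : ∀ v, v ∉ L → 3 ≤ (T.neighborSet v).ncard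

namespace PhyloTree

variable {V : Type*}

/-- The unique path between two vertices of the tree. -/
noncomputable def path (P : PhyloTree V) (u v : V) : P.T.Walk u v :=
  (P.isTree.existsUnique_path u v).exists.choose

lemma path_isPath (P : PhyloTree V) (u v : V) : (P.path u v).IsPath :=
  (P.isTree.existsUnique_path u v).exists.choose_spec

/-- The tree distance: the sum of the edge lengths along the unique path. -/
noncomputable def dist (P : PhyloTree V) (u v : V) : ℝ :=
  ((P.path u v).edges.map P.len).sum

lemma dist_comm (P : PhyloTree V) (u v : V) : P.dist u v = P.dist v u := by
  have h : (P.path u v).reverse = P.path v u :=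
    (P.isTree.existsUnique_path v u).unique ((P.path_isPath u v).reverse)
      (P.path_isPath v u)
  unfold dist
  rw [← h, SimpleGraph.Walk.edges_reverse, List.map_reverse, List.sum_reverse]

/-- The tree distance as a symmetric function on unordered pairs. -/
noncomputable def wdist (P : PhyloTree V) : Sym2 V → ℝ :=
  Sym2.lift ⟨fun u v => P.dist u v, fun u v => P.dist_comm u v⟩

/-- The surrogate set of a vertex: the labeled vertices closest to it. -/
def Sg (P : PhyloTree V) (h : V) : Set V :=
  {l | l ∈ P.L ∧ ∀ l' ∈ P.L, P.dist l h ≤ P.dist l' h}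

/-- `s` is the surrogate vertex `Sg_R(h)` of `h` w.r.t. the ranking `R`:
the element of the surrogate set of `h` of smallest `R`-value. -/
def IsSgR (P : PhyloTree V) (R : V → ℕ) (h : V) (s : V) : Prop :=
  s ∈ P.Sg h ∧ ∀ l ∈ P.Sg h, R s ≤ R l

/-- The edge weights of the distance graph of `P` (the complete graph on `↥P.L`). -/
noncomputable def wG (P : PhyloTree V) : Sym2 ↥P.L → ℝ :=
  fun e => P.wdist (e.map Subtype.val)

/-- An edge `e` of the distance graph lying in at least one MST (i.e. an edge of `g`). -/
def mstEdge (P : PhyloTree V) (e : Sym2 ↥P.L) : Prop :=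
  haveI := P.finV
  ∃ M : SimpleGraph ↥P.L, IsMST (⊤ : SimpleGraph ↥P.L) P.wG M ∧ e ∈ M.edgeSet

/-- `δ_max(v)`: the maximum degree of `v` over all MSTs of the distance graph. -/
noncomputable def deltaMax (P : PhyloTree V) (v : ↥P.L) : ℕ :=
  haveI := P.finV
  sSup {d : ℕ | ∃ M : SimpleGraph ↥P.L,
    IsMST (⊤ : SimpleGraph ↥P.L) P.wG M ∧ d = (M.neighborSet v).ncard}

end PhyloTree

/-- The smaller of the two ranks of the endpoints of an edge. -/
def sym2MinR {α : Type*} (R : α → ℕ) : Sym2 α → ℕ :=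
  Sym2.lift ⟨fun a b => min (R a) (R b), fun a b => min_comm _ _⟩

/-- The larger of the two ranks of the endpoints of an edge. -/
def sym2MaxR {α : Type*} (R : α → ℕ) : Sym2 α → ℕ :=
  Sym2.lift ⟨fun a b => max (R a) (R b), fun a b => max_comm _ _⟩

/-- The strict total order `<_R` on edges: first by weight, then by the smaller rank of
the endpoints, then by the larger rank of the endpoints. -/
def edgeLT {α : Type*} (w : Sym2 α → ℝ) (R : α → ℕ) (e f : Sym2 α) : Prop :=
  w e < w f ∨ (w e = w f ∧ (sym2MinR R e < sym2MinR R f ∨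
    (sym2MinR R e = sym2MinR R f ∧ sym2MaxR R e < sym2MaxR R f)))

/-- `M` is the vertex-ranked MST of `G` w.r.t. the ranking `R`: a spanning tree such that
every non-tree edge `{u,v}` of `G` is the `<_R`-greatest edge of the cycle it closes,
i.e. every edge of the `M`-path from `u` to `v` is `<_R`-smaller than `{u,v}`. -/
def IsVRMST {α : Type*} (G : SimpleGraph α) (w : Sym2 α → ℝ) (R : α → ℕ)
    (M : SimpleGraph α) : Prop :=
  IsSpanningTree G M ∧ ∀ u v : α, G.Adj u v → ¬M.Adj u v →
    ∀ p : M.Walk u v, p.IsPath → ∀ f ∈ p.edges, edgeLT w R f s(u, v)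

/-!
If `u` lies on the tree path from `j` to `h`, then `d(j,h) = d(j,u) + d(u,h)`. Combined with the
triangle inequality `d(l,h) ≤ d(l,u) + d(u,h)`, minimality of `j` for `h` makes `j` closest to `u`,
and every label closest to `u` is also closest to `h`. So `Sg(u) ⊆ Sg(h)` contains `j`, and the
`R`-minimal element of `Sg(h)` is still `R`-minimal in `Sg(u)`.
-/

namespace PhyloTree

variable {V : Type*} (P : PhyloTree V)

lemma path_eq_of_isPath {a b : V} {p : P.T.Walk a b} (hp : p.IsPath) : P.path a b = p :=
  (P.isTree.existsUnique_path a b).unique (P.path_isPath a b) hp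

lemma dist_le_sum_len_walk {a b : V} (p : P.T.Walk a b) :
    P.dist a b ≤ (p.edges.map P.len).sum := by
  classical
  rw [dist, P.path_eq_of_isPath p.bypass_isPath]
  refine (p.edges_bypass_sublist_edges.map _).sum_le_sum fun x hx => ?_
  obtain ⟨e, he, rfl⟩ := List.mem_map.1 hx
  exact (P.len_pos e (p.edges_subset_edgeSet he)).le

lemma dist_triangle (a b c : V) : P.dist a c ≤ P.dist a b + P.dist b c := by
  have := P.dist_le_sum_len_walk ((P.path a b).append (P.path b c))
  rwa [SimpleGraph.Walk.edges_append, List.map_append, List.sum_append] at this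

lemma dist_add_dist_of_mem_support_path {a b c : V} (hb : b ∈ (P.path a c).support) :
    P.dist a b + P.dist b c = P.dist a c := by
  classical
  rw [dist, dist, dist, P.path_eq_of_isPath ((P.path_isPath a c).takeUntil hb),
    P.path_eq_of_isPath ((P.path_isPath a c).dropUntil hb), ← List.sum_append,
    ← List.map_append, ← SimpleGraph.Walk.edges_append, (P.path a c).take_spec hb]

variable {P} {h j u : V}

lemma mem_Sg_of_mem_support_path (hj : j ∈ P.Sg h) (hu : u ∈ (P.path j h).support) :
    j ∈ P.Sg u := by
  refine ⟨hj.1, fun l hl => ?_⟩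
  have := P.dist_add_dist_of_mem_support_path hu
  linarith [hj.2 l hl, P.dist_triangle l u h]

lemma Sg_subset_of_mem_support_path (hj : j ∈ P.Sg h) (hu : u ∈ (P.path j h).support) :
    P.Sg u ⊆ P.Sg h := by
  refine fun l hl => ⟨hl.1, fun l' hl' => ?_⟩
  have := P.dist_add_dist_of_mem_support_path hu
  linarith [hj.2 l' hl', hl.2 j hj.1, P.dist_triangle l u h]

end PhyloTree

theorem surrogate_on_path_general {V : Type*} (P : PhyloTree V) (R : V → ℕ)
    (h j : V) (hsg : P.IsSgR R h j) :
    ∀ u ∈ (P.path j h).support, P.IsSgR R u j := fun _ hu =>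
  ⟨PhyloTree.mem_Sg_of_mem_support_path hsg.1 hu,
    fun l hl => hsg.2 l (PhyloTree.Sg_subset_of_mem_support_path hsg.1 hu hl)⟩

/-- if `Sg_R(h) = j` then every vertex `u` on the path in `T` between `j`
and `h` satisfies `Sg_R(u) = j`. -/
theorem surrogate_on_path {V : Type*} (P : PhyloTree V) (R : V → ℕ)
    (hR : Set.InjOn R P.L) (h j : V) (hsg : P.IsSgR R h j) :
    ∀ u ∈ (P.path j h).support, P.IsSgR R u j :=
  surrogate_on_path_general P R h j hsg
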